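/- For any λ ∈ P^B_{2n+1}, Φ^B(Φ̂^B(λ)) = λ; moreover, the posets Q_n^B and P^B_{2n+1} are isomorphic via the mutually inverse order-preserving maps Φ^B (restricted to Q_n^B) and Φ̂^B. -/

import Mathlib

open Finset

/-- Partial sum of the first `k` terms of a sequence of naturals. -/
def psum (π : ℕ → ℕ) (k : ℕ) : ℕ := ∑ i ∈ Finset.range k, π i

/-- A composition of `n`: almost all terms zero, summing to `n`. -/
def IsComposition (n : ℕ) (π : ℕ → ℕ) : Prop :=
  ∃ N, (∀ i, N ≤ i → π i = 0) ∧ psum π N = n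

/-- Dominance order: `l` dominates `π`. -/
def Dominates (l π : ℕ → ℕ) : Prop := ∀ k, psum π k ≤ psum l k

/-- A partition: weakly decreasing sequence. -/
def IsPartition (π : ℕ → ℕ) : Prop := ∀ i, π (i + 1) ≤ π i

/-- A quasi-partition: `π i ≥ π (i+2)` for all `i`. -/
def IsQuasiPartition (π : ℕ → ℕ) : Prop := ∀ i, π (i + 2) ≤ π i

/-- Interleaving of two sequences: `(ρ₁, σ₁, ρ₂, σ₂, …)` (0-indexed). -/
def interleave (ρ σ : ℕ → ℕ) (i : ℕ) : ℕ :=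
  if i % 2 = 0 then ρ (i / 2) else σ (i / 2)

/-- A bipartition of `n`: a pair of partitions whose interleaving sums to `n`. -/
def IsBipartition (n : ℕ) (ρ σ : ℕ → ℕ) : Prop :=
  IsPartition ρ ∧ IsPartition σ ∧ IsComposition n (interleave ρ σ)

/-- Interleaved dominance order on bipartitions: `(ρ;σ) ≤ (μ;ν)`. -/
def BiLE (ρ σ μ ν : ℕ → ℕ) : Prop :=
  Dominates (interleave μ ν) (interleave ρ σ)

/-- The map `Φ^C` on sequences: replace a consecutive pair `2s < 2t`
by `s+t, s+t` (pointwise description; replacements never overlap for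
quasi-partitions). -/
def phiC (π : ℕ → ℕ) : ℕ → ℕ
  | 0 => if π 0 < π 1 then (π 0 + π 1) / 2 else π 0
  | (j + 1) =>
      if π (j + 1) < π (j + 2) then (π (j + 1) + π (j + 2)) / 2
      else if π j < π (j + 1) then (π j + π (j + 1)) / 2
      else π (j + 1)

/-- `Φ^C` of a bipartition: apply `phiC` to the doubled interleaving. -/
def PhiC (ρ σ : ℕ → ℕ) : ℕ → ℕ := phiC (fun i => 2 * interleave ρ σ i)

/-- Membership in `P^C_{2n}`: partition of `2n` with every odd part of even
multiplicity. -/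
def IsPC (n : ℕ) (l : ℕ → ℕ) : Prop :=
  IsPartition l ∧ IsComposition (2 * n) l ∧
    ∀ a : ℕ, Odd a → Even ({i | l i = a}.ncard)

/-- C-distinguished: `μ i ≥ ν i - 1` and `ν i ≥ μ (i+1) - 1`. -/
def QC (μ ν : ℕ → ℕ) : Prop :=
  ∀ i, ν i ≤ μ i + 1 ∧ μ (i + 1) ≤ ν i + 1

/-- B-distinguished: `μ i ≥ ν i - 2` and `ν i ≥ μ (i+1)`. -/
def QB (μ ν : ℕ → ℕ) : Prop :=
  ∀ i, ν i ≤ μ i + 2 ∧ μ (i + 1) ≤ ν i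

/-- Special: `μ i ≥ ν i - 1` and `ν i ≥ μ (i+1)`. -/
def QS (μ ν : ℕ → ℕ) : Prop :=
  ∀ i, ν i ≤ μ i + 1 ∧ μ (i + 1) ≤ ν i

/-- The condition defining `Q_n^{B,2}`: `μ i ≥ ν i - 2`. -/
def QB2 (μ ν : ℕ → ℕ) : Prop := ∀ i, ν i ≤ μ i + 2

/-- For an antitone sequence, the starting index of the run of equal values
containing index `i`. -/
noncomputable def runStart (l : ℕ → ℕ) (i : ℕ) : ℕ := {j | l i < l j}.ncard

/-- The map `Φ̂^C`, pointwise: halve even parts; replace an (even-length)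
maximal run of an odd part `2k+1` with `k, k+1, k, k+1, …`. -/
noncomputable def hphiC (l : ℕ → ℕ) (i : ℕ) : ℕ :=
  if Even (l i) then l i / 2
  else if Even (i - runStart l i) then l i / 2 else l i / 2 + 1

/-- Partial sums of an integer sequence. -/
def zsum (π : ℕ → ℤ) (k : ℕ) : ℤ := ∑ i ∈ Finset.range k, π i

/-- Dominance order on integer sequences. -/
def ZDominates (l π : ℕ → ℤ) : Prop := ∀ k, zsum π k ≤ zsum l k

/-- The interleaved integer sequence `(2ρ₁+1, 2σ₁−1, 2ρ₂+1, 2σ₂−1, …)`. -/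
def interB (ρ σ : ℕ → ℕ) (i : ℕ) : ℤ :=
  if i % 2 = 0 then 2 * (ρ (i / 2) : ℤ) + 1 else 2 * (σ (i / 2) : ℤ) - 1

/-- The map `Φ^B` on integer sequences: replace a consecutive pair `s < t`
by `(s+t)/2, (s+t)/2` (pointwise description). -/
def phiB (π : ℕ → ℤ) : ℕ → ℤ
  | 0 => if π 0 < π 1 then (π 0 + π 1) / 2 else π 0
  | (j + 1) =>
      if π (j + 1) < π (j + 2) then (π (j + 1) + π (j + 2)) / 2
      else if π j < π (j + 1) then (π j + π (j + 1)) / 2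
      else π (j + 1)

/-- `Φ^B` of a bipartition. -/
def PhiB (ρ σ : ℕ → ℕ) : ℕ → ℤ := phiB (interB ρ σ)

/-- Membership in `P^B_{2n+1}` for an integer sequence: nonnegative, weakly
decreasing, summing to `2n+1`, with every (positive) even part of even
multiplicity. -/
def IsPB (n : ℕ) (l : ℕ → ℤ) : Prop :=
  (∀ i, 0 ≤ l i) ∧ (∀ i, l (i + 1) ≤ l i) ∧
  (∃ N, (∀ i, N ≤ i → l i = 0) ∧ zsum l N = 2 * n + 1) ∧
  ∀ a : ℤ, 0 < a → Even a → Even ({i | l i = a}.ncard)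

/-- Membership in `P^B_{2n+1}` for a natural-number partition. -/
def IsPBN (n : ℕ) (l : ℕ → ℕ) : Prop :=
  IsPartition l ∧ IsComposition (2 * n + 1) l ∧
    ∀ a : ℕ, 0 < a → Even a → Even ({i | l i = a}.ncard)

/-- The map `Φ̂^B`, pointwise (0-indexed, so the paper's index `i` is `j+1`):
an odd part `λ_i` becomes `(λ_i + (−1)^i)/2`; a maximal run of an even part
`2k` starting at (0-indexed) position `s` becomes `k, k, …` if `s` is odd
(paper's `i` even) and `k−1, k+1, k−1, k+1, …` if `s` is even (paper's `i`
odd). -/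
noncomputable def hphiB (l : ℕ → ℕ) (j : ℕ) : ℕ :=
  if Odd (l j) then (if Even j then (l j - 1) / 2 else (l j + 1) / 2)
  else
    if Odd (runStart l j) then l j / 2
    else if Even (j - runStart l j) then l j / 2 - 1 else l j / 2 + 1

/-- First component of the special closure `(ρ;σ)°`. -/
def scRho (ρ σ : ℕ → ℕ) : ℕ → ℕ
  | 0 => if ρ 0 + 1 < σ 0 then (ρ 0 + σ 0) / 2 else ρ 0
  | (i + 1) =>
      if ρ (i + 1) + 1 < σ (i + 1) then (ρ (i + 1) + σ (i + 1)) / 2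
      else if σ i < ρ (i + 1) then (σ i + ρ (i + 1)) / 2
      else ρ (i + 1)

/-- Second component of the special closure `(ρ;σ)°`. -/
def scSigma (ρ σ : ℕ → ℕ) (i : ℕ) : ℕ :=
  if ρ i + 1 < σ i then (ρ i + σ i + 1) / 2
  else if σ i < ρ (i + 1) then (σ i + ρ (i + 1) + 1) / 2
  else σ i

/-- First component of the closure `(ρ;σ)~` into `Q_n^{B,2}`. -/
def tRho (ρ σ : ℕ → ℕ) (i : ℕ) : ℕ :=
  if ρ i + 2 < σ i then (ρ i + σ i + 1) / 2 - 1 else ρ i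

/-- Second component of the closure `(ρ;σ)~` into `Q_n^{B,2}`. -/
def tSigma (ρ σ : ℕ → ℕ) (i : ℕ) : ℕ :=
  if ρ i + 2 < σ i then (ρ i + σ i) / 2 + 1 else σ i

/-- First component of the closure `(ρ;σ)^B` into `Q_n^B`. -/
def bRho (ρ σ : ℕ → ℕ) : ℕ → ℕ
  | 0 => if ρ 0 + 2 < σ 0 then (ρ 0 + σ 0 + 1) / 2 - 1 else ρ 0
  | (i + 1) =>
      if ρ (i + 1) + 2 < σ (i + 1) then (ρ (i + 1) + σ (i + 1) + 1) / 2 - 1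
      else if σ i < ρ (i + 1) then (σ i + ρ (i + 1)) / 2
      else ρ (i + 1)

/-- Second component of the closure `(ρ;σ)^B` into `Q_n^B`. -/
def bSigma (ρ σ : ℕ → ℕ) (i : ℕ) : ℕ :=
  if ρ i + 2 < σ i then (ρ i + σ i) / 2 + 1
  else if σ i < ρ (i + 1) then (σ i + ρ (i + 1) + 1) / 2
  else σ i

/-- First component of the closure `(ρ;σ)^C` into `Q_n^C`. -/
def cRho (ρ σ : ℕ → ℕ) : ℕ → ℕ
  | 0 => if ρ 0 + 1 < σ 0 then (ρ 0 + σ 0) / 2 else ρ 0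
  | (i + 1) =>
      if ρ (i + 1) + 1 < σ (i + 1) then (ρ (i + 1) + σ (i + 1)) / 2
      else if σ i + 1 < ρ (i + 1) then (σ i + ρ (i + 1) + 1) / 2
      else ρ (i + 1)

/-- Second component of the closure `(ρ;σ)^C` into `Q_n^C`. -/
def cSigma (ρ σ : ℕ → ℕ) (i : ℕ) : ℕ :=
  if ρ i + 1 < σ i then (ρ i + σ i + 1) / 2
  else if σ i + 1 < ρ (i + 1) then (σ i + ρ (i + 1)) / 2
  else σ i

/-!
Write `π = interB ρ σ = (2ρ₁+1, 2σ₁−1, 2ρ₂+1, …)`. That `ρ`, `σ` are partitions and `(ρ;σ)` is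
B-distinguished says exactly that `π` is odd-valued with `π (j+1) ≤ π j + 2` and
`π (j+2) ≤ π j`. For such `π` every rise is a step `s, s+2`, and two rises never overlap, so
`Φ^B` only merges disjoint rises into `s+1, s+1`; on partial sums this adds `1` exactly after the
left end of a rise. As `∑_{j<k} π j ≡ k (mod 2)`, the partial sums of `π` can be read off from
those of `Φ^B π`: hence `Φ^B` is injective on such sequences and preserves and reflects
dominance, while the even parts of `Φ^B π` are the merged rises and so come in pairs.

Conversely, for `λ ∈ P^B_{2n+1}` every run of a positive even value has even length, and the
run of zeros starts at an odd position, since `λ` has an odd number of positive parts. Hence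
`interB (Φ̂^B λ)` keeps the odd parts of `λ` and turns each run `2k, …, 2k` into rises
`2k−1, 2k+1, …`; it is again such a sequence, and `Φ^B` merges it back to `λ`.
Injectivity of `Φ^B` then makes `Φ̂^B ∘ Φ^B` the identity on `Q_n^B`.
-/

lemma zsum_zero (f : ℕ → ℤ) : zsum f 0 = 0 := rfl

lemma zsum_succ (f : ℕ → ℤ) (k : ℕ) : zsum f (k + 1) = zsum f k + f k :=
  Finset.sum_range_succ f k

lemma psum_succ (f : ℕ → ℕ) (k : ℕ) : psum f (k + 1) = psum f k + f k :=
  Finset.sum_range_succ f k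

lemma psum_eq_of_le {f : ℕ → ℕ} {N k : ℕ} (hN : ∀ i, N ≤ i → f i = 0) (hk : N ≤ k) :
    psum f k = psum f N := by
  induction k, hk using Nat.le_induction with
  | base => rfl
  | succ k hk ih => rw [psum_succ, hN k hk, ih, add_zero]

lemma psum_cast (f : ℕ → ℕ) (k : ℕ) : (psum f k : ℤ) = zsum (fun i => (f i : ℤ)) k := by
  simp [psum, zsum]

/-- Exactly the sequences `interB ρ σ` of B-distinguished bipartitions, see
`isQBSeq_interB_iff`. -/
structure IsQBSeq (π : ℕ → ℤ) : Prop where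
  emod_two : ∀ j, π j % 2 = 1
  succ_le : ∀ j, π (j + 1) ≤ π j + 2
  add_two_le : ∀ j, π (j + 2) ≤ π j

namespace IsQBSeq

variable {π π' : ℕ → ℤ}

lemma succ_eq_of_lt (h : IsQBSeq π) {j : ℕ} (hlt : π j < π (j + 1)) : π (j + 1) = π j + 2 := by
  have := h.emod_two j; have := h.emod_two (j + 1); have := h.succ_le j; omega

lemma not_lt_of_lt (h : IsQBSeq π) {j : ℕ} (hlt : π j < π (j + 1)) :
    ¬ π (j + 1) < π (j + 2) := fun hlt' => by
  have := h.succ_eq_of_lt hlt; have := h.succ_eq_of_lt hlt'; have := h.add_two_le j; omega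

lemma phiB_zero (h : IsQBSeq π) : phiB π 0 = π 0 + if π 0 < π 1 then 1 else 0 := by
  have : π 0 < π 1 → π 1 = π 0 + 2 := h.succ_eq_of_lt
  simp only [phiB]; split_ifs <;> omega

lemma phiB_succ (h : IsQBSeq π) (j : ℕ) :
    phiB π (j + 1) = π (j + 1) + (if π (j + 1) < π (j + 2) then 1 else 0)
      - (if π j < π (j + 1) then 1 else 0) := by
  have : π j < π (j + 1) → π (j + 1) = π j + 2 := h.succ_eq_of_lt
  have : π (j + 1) < π (j + 2) → π (j + 2) = π (j + 1) + 2 := h.succ_eq_of_lt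
  have : π j < π (j + 1) → ¬ π (j + 1) < π (j + 2) := h.not_lt_of_lt
  simp only [phiB]; split_ifs <;> omega

lemma zsum_phiB (h : IsQBSeq π) (k : ℕ) :
    zsum (phiB π) (k + 1) = zsum π (k + 1) + if π k < π (k + 1) then 1 else 0 := by
  induction k with
  | zero => rw [zsum_succ, zsum_succ, h.phiB_zero, zsum_zero, zsum_zero]; ring
  | succ k ih =>
    rw [zsum_succ, ih, h.phiB_succ, zsum_succ π (k + 1)]
    have : π k < π (k + 1) → ¬ π (k + 1) < π (k + 2) := h.not_lt_of_lt
    split_ifs <;> omega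

lemma zsum_emod_two (h : IsQBSeq π) (k : ℕ) : zsum π k % 2 = k % 2 := by
  induction k with
  | zero => rfl
  | succ k ih => rw [zsum_succ]; have := h.emod_two k; omega

lemma eq_of_phiB_eq (h : IsQBSeq π) (h' : IsQBSeq π') (heq : phiB π = phiB π') : π = π' := by
  have hsum : ∀ k, zsum π k = zsum π' k := by
    rintro (_ | k)
    · rfl
    · have e := h.zsum_phiB k; have e' := h'.zsum_phiB k
      have p := h.zsum_emod_two (k + 1); have p' := h'.zsum_emod_two (k + 1)
      rw [heq] at e
      split_ifs at e e' <;> omega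
  funext k
  have := hsum (k + 1); rw [zsum_succ, zsum_succ, hsum k] at this; linarith

lemma zdominates_phiB_iff (h : IsQBSeq π) (h' : IsQBSeq π') :
    ZDominates (phiB π') (phiB π) ↔ ZDominates π' π := by
  constructor
  · rintro hd (_ | k)
    · exact le_rfl
    · have d := hd (k + 1)
      rw [h.zsum_phiB, h'.zsum_phiB] at d
      have p := h.zsum_emod_two (k + 1); have p' := h'.zsum_emod_two (k + 1)
      split_ifs at d <;> omega
  · rintro hd (_ | k)
    · exact le_rfl
    · -- if only `π` rises at `k`, dominance at `k` and `k + 2` forces a strict one at `k + 1`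
      rw [h.zsum_phiB, h'.zsum_phiB]
      have d1 : zsum π k ≤ zsum π' k := hd k
      have d2 : zsum π k + π k ≤ zsum π' k + π' k := by simpa only [zsum_succ] using hd (k + 1)
      have d3 : zsum π (k + 1) + π (k + 1) ≤ zsum π' (k + 1) + π' (k + 1) := by
        simpa only [zsum_succ π (k + 1), zsum_succ π' (k + 1)] using hd (k + 2)
      have e : zsum π (k + 1) = zsum π k + π k := zsum_succ π k
      have e' : zsum π' (k + 1) = zsum π' k + π' k := zsum_succ π' k
      have : π k < π (k + 1) → π (k + 1) = π k + 2 := h.succ_eq_of_lt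
      have : π' k < π' (k + 1) → π' (k + 1) = π' k + 2 := h'.succ_eq_of_lt
      have := h'.succ_le k
      split_ifs <;> omega

lemma phiB_succ_le (h : IsQBSeq π) : ∀ j, phiB π (j + 1) ≤ phiB π j
  | 0 => by
    have := h.emod_two 0; have := h.emod_two 1; have : π 2 ≤ π 0 := h.add_two_le 0
    have : π 0 < π 1 → π 1 = π 0 + 2 := h.succ_eq_of_lt
    have : π 1 < π 2 → π 2 = π 1 + 2 := h.succ_eq_of_lt
    rw [h.phiB_zero, h.phiB_succ, zero_add, zero_add]; split_ifs <;> omega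
  | i + 1 => by
    have := h.emod_two (i + 1); have := h.emod_two (i + 2)
    have := h.add_two_le i; have : π (i + 3) ≤ π (i + 1) := h.add_two_le (i + 1)
    have : π i < π (i + 1) → π (i + 1) = π i + 2 := h.succ_eq_of_lt
    have : π (i + 1) < π (i + 2) → π (i + 2) = π (i + 1) + 2 := h.succ_eq_of_lt
    have : π (i + 2) < π (i + 3) → π (i + 3) = π (i + 2) + 2 := h.succ_eq_of_lt
    rw [h.phiB_succ, h.phiB_succ]
    simp only [add_assoc, Nat.reduceAdd]
    split_ifs <;> omega

lemma phiB_of_lt (h : IsQBSeq π) {j : ℕ} (hlt : π j < π (j + 1)) : phiB π j = π j + 1 := by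
  cases j with
  | zero => rw [h.phiB_zero, if_pos hlt]
  | succ i =>
    have : ¬ π i < π (i + 1) := fun h' => h.not_lt_of_lt h' hlt
    rw [h.phiB_succ, if_pos hlt, if_neg this]; ring

lemma phiB_succ_of_lt (h : IsQBSeq π) {j : ℕ} (hlt : π j < π (j + 1)) :
    phiB π (j + 1) = π j + 1 := by
  rw [h.phiB_succ, if_neg (h.not_lt_of_lt hlt), if_pos hlt, h.succ_eq_of_lt hlt]; ring

lemma even_ncard_phiB_eq (h : IsQBSeq π) {a : ℤ} (ha : Even a)
    (hfin : {i | phiB π i = a}.Finite) : Even {i | phiB π i = a}.ncard := by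
  set T := {j | π j < π (j + 1) ∧ π j + 1 = a}
  have hT : {i | phiB π i = a} = T ∪ (· + 1) '' T := by
    ext i
    simp only [Set.mem_ofPred_eq, Set.mem_union, Set.mem_image, T]
    constructor
    · rintro rfl
      obtain ⟨b, hb⟩ := ha
      cases i with
      | zero =>
        have := h.emod_two 0
        rw [h.phiB_zero] at hb ⊢
        split_ifs at hb ⊢ with hlt
        · exact Or.inl ⟨hlt, rfl⟩
        · omega
      | succ k =>
        have := h.emod_two (k + 1)
        by_cases hlt : π (k + 1) < π (k + 2)
        · exact Or.inl ⟨hlt, (h.phiB_of_lt hlt).symm⟩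
        by_cases hlt' : π k < π (k + 1)
        · exact Or.inr ⟨k, ⟨hlt', (h.phiB_succ_of_lt hlt').symm⟩, rfl⟩
        rw [h.phiB_succ, if_neg hlt, if_neg hlt'] at hb; omega
    · rintro (⟨hlt, rfl⟩ | ⟨j, ⟨hlt, rfl⟩, rfl⟩)
      · exact h.phiB_of_lt hlt
      · exact h.phiB_succ_of_lt hlt
  have hTfin : T.Finite := hfin.subset (hT ▸ Set.subset_union_left)
  have hdisj : Disjoint T ((· + 1) '' T) := by
    rw [Set.disjoint_left]
    rintro _ ⟨hlt, -⟩ ⟨j, ⟨hlt', -⟩, rfl⟩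
    exact h.not_lt_of_lt hlt' hlt
  rw [hT, Set.ncard_union_eq hdisj hTfin (hTfin.image _),
    Set.ncard_image_of_injective _ (add_left_injective 1)]
  exact ⟨T.ncard, rfl⟩

end IsQBSeq

lemma interleave_even_odd (f : ℕ → ℕ) :
    interleave (fun j => f (2 * j)) (fun j => f (2 * j + 1)) = f := by
  funext i
  unfold interleave
  split_ifs <;> exact congrArg f (by omega)

lemma interB_eq (ρ σ : ℕ → ℕ) (j : ℕ) :
    interB ρ σ j = 2 * (interleave ρ σ j : ℤ) + if j % 2 = 0 then 1 else -1 := by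
  unfold interB interleave
  split_ifs <;> ring

lemma zsum_interB (ρ σ : ℕ → ℕ) (k : ℕ) :
    zsum (interB ρ σ) k = 2 * (psum (interleave ρ σ) k : ℤ) + (k % 2 : ℕ) := by
  induction k with
  | zero => rfl
  | succ k ih =>
    rw [zsum_succ, ih, psum_succ, interB_eq]
    split_ifs <;> push_cast <;> omega

lemma biLE_iff_zdominates_interB (ρ σ μ ν : ℕ → ℕ) :
    BiLE ρ σ μ ν ↔ ZDominates (interB μ ν) (interB ρ σ) := by
  refine forall_congr' fun k => ?_
  rw [zsum_interB, zsum_interB]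
  omega

lemma isQBSeq_interB_iff {ρ σ : ℕ → ℕ} :
    IsQBSeq (interB ρ σ) ↔ IsPartition ρ ∧ IsPartition σ ∧ QB ρ σ := by
  have even : ∀ i, interB ρ σ (2 * i) = 2 * (ρ i : ℤ) + 1 := fun i => by
    simp [interB]
  have odd : ∀ i, interB ρ σ (2 * i + 1) = 2 * (σ i : ℤ) - 1 := fun i => by
    simp [interB, Nat.add_mod, Nat.add_div]
  constructor
  · intro h
    refine ⟨fun i => ?_, fun i => ?_, fun i => ⟨?_, ?_⟩⟩
    · have := h.add_two_le (2 * i)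
      rw [show 2 * i + 2 = 2 * (i + 1) by ring, even, even] at this; omega
    · have := h.add_two_le (2 * i + 1)
      rw [show 2 * i + 1 + 2 = 2 * (i + 1) + 1 by ring, odd, odd] at this; omega
    · have := h.succ_le (2 * i); rw [odd, even] at this; omega
    · have := h.succ_le (2 * i + 1)
      rw [show 2 * i + 1 + 1 = 2 * (i + 1) by ring, odd, even] at this; omega
  · rintro ⟨hρ, hσ, hq⟩
    refine ⟨fun j => ?_, fun j => ?_, fun j => ?_⟩ <;> obtain ⟨i, rfl | rfl⟩ := Nat.even_or_odd' j
    · rw [even]; omega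
    · rw [odd]; omega
    · rw [even, odd]; have := (hq i).1; omega
    · rw [show 2 * i + 1 + 1 = 2 * (i + 1) by ring, odd, even]; have := (hq i).2; omega
    · rw [show 2 * i + 2 = 2 * (i + 1) by ring, even, even]; have := hρ i; omega
    · rw [show 2 * i + 1 + 2 = 2 * (i + 1) + 1 by ring, odd, odd]; have := hσ i; omega

lemma IsBipartition.isQBSeq_interB {n : ℕ} {ρ σ : ℕ → ℕ} (hb : IsBipartition n ρ σ)
    (hq : QB ρ σ) : IsQBSeq (interB ρ σ) :=
  isQBSeq_interB_iff.mpr ⟨hb.1, hb.2.1, hq⟩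

section PhiBInterB

variable {ρ σ : ℕ → ℕ} {N : ℕ}

lemma phiB_interB_eq_zero (h : IsQBSeq (interB ρ σ)) (hN : ∀ i, N ≤ i → interleave ρ σ i = 0)
    {j : ℕ} (hj : N < j) : phiB (interB ρ σ) j = 0 := by
  obtain ⟨i, rfl⟩ : ∃ i, j = i + 1 := ⟨j - 1, by omega⟩
  have e0 := interB_eq ρ σ i; have e1 := interB_eq ρ σ (i + 1); have e2 := interB_eq ρ σ (i + 2)
  rw [hN i (by omega)] at e0; rw [hN (i + 1) (by omega)] at e1; rw [hN (i + 2) (by omega)] at e2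
  rw [h.phiB_succ]
  split_ifs at e0 e1 e2 <;> split_ifs <;> omega

lemma phiB_interB_nonneg (h : IsQBSeq (interB ρ σ)) (hN : ∀ i, N ≤ i → interleave ρ σ i = 0)
    (j : ℕ) : 0 ≤ phiB (interB ρ σ) j := by
  have := antitone_nat_of_succ_le h.phiB_succ_le (le_max_left j (N + 1))
  rwa [phiB_interB_eq_zero h hN (by omega)] at this

lemma zsum_phiB_interB (h : IsQBSeq (interB ρ σ)) (hN : ∀ i, N ≤ i → interleave ρ σ i = 0) :
    zsum (phiB (interB ρ σ)) (2 * N + 2) = 2 * (psum (interleave ρ σ) N : ℤ) + 1 := by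
  have e1 : interB ρ σ (2 * N + 1) = -1 := by
    rw [interB_eq, hN _ (by omega), if_neg (by omega)]; rfl
  have e2 : interB ρ σ (2 * N + 2) = 1 := by
    rw [interB_eq, hN _ (by omega), if_pos (by omega)]; rfl
  rw [h.zsum_phiB, zsum_interB, psum_eq_of_le hN (by omega), if_pos (by rw [e1, e2]; omega)]
  push_cast; omega

variable {n : ℕ}

lemma isPBN_phiB_interB (hb : IsBipartition n ρ σ) (hq : QB ρ σ) :
    IsPBN n (fun j => (PhiB ρ σ j).toNat) := by
  unfold PhiB
  have h := hb.isQBSeq_interB hq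
  obtain ⟨-, -, N, hN, hsum⟩ := hb
  have hcast : ∀ j, ((phiB (interB ρ σ) j).toNat : ℤ) = phiB (interB ρ σ) j :=
    fun j => Int.toNat_of_nonneg (phiB_interB_nonneg h hN j)
  refine ⟨fun j => Int.toNat_le_toNat (h.phiB_succ_le j), ⟨2 * N + 2, fun j hj => ?_, ?_⟩,
    fun a ha hev => ?_⟩
  · simp only [phiB_interB_eq_zero h hN (show N < j by omega), Int.toNat_zero]
  · have hz := zsum_phiB_interB h hN
    rw [hsum, ← funext hcast, ← psum_cast] at hz
    exact_mod_cast hz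
  · have hset : {i | (phiB (interB ρ σ) i).toNat = a} = {i | phiB (interB ρ σ) i = a} := by
      ext i; have := hcast i; simp only [Set.mem_ofPred_eq]; omega
    rw [hset]
    refine h.even_ncard_phiB_eq (by exact_mod_cast hev)
      ((Set.finite_Iio (N + 1)).subset fun i (hi : phiB _ i = a) => ?_)
    by_contra hlt
    rw [Set.mem_Iio, not_lt] at hlt
    rw [phiB_interB_eq_zero h hN hlt] at hi
    omega

end PhiBInterB

lemma mem_iff_lt_ncard_of_isLowerSet {s : Set ℕ} (hs : IsLowerSet s) (hfin : s.Finite) {j : ℕ} :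
    j ∈ s ↔ j < s.ncard := by
  obtain h | ⟨a, rfl⟩ := hs.eq_univ_or_Iio
  · exact absurd (h ▸ hfin) Set.infinite_univ
  · rw [Set.ncard_eq_toFinset_card', Set.toFinset_Iio, Nat.card_Iio, Set.mem_Iio]

section Runs

variable {l : ℕ → ℕ} {N : ℕ}

lemma finite_setOf_lt_apply (hN : ∀ i, N ≤ i → l i = 0) (a : ℕ) : {j | a < l j}.Finite :=
  (Set.finite_Iio N).subset fun j hj => by
    by_contra h
    simp only [Set.mem_ofPred_eq, Set.mem_Iio, not_lt] at hj h
    rw [hN j h] at hj; omega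

lemma lt_ncard_setOf_lt_iff (hl : IsPartition l) (hN : ∀ i, N ≤ i → l i = 0) (a : ℕ) {j : ℕ} :
    j < {j | a < l j}.ncard ↔ a < l j :=
  (mem_iff_lt_ncard_of_isLowerSet
    (fun _ _ hab hb => lt_of_lt_of_le hb (antitone_nat_of_succ_le hl hab))
    (finite_setOf_lt_apply hN a)).symm

lemma lt_runStart_iff (hl : IsPartition l) (hN : ∀ i, N ≤ i → l i = 0) {i j : ℕ} :
    j < runStart l i ↔ l i < l j :=
  lt_ncard_setOf_lt_iff hl hN (l i)

lemma runStart_le (hl : IsPartition l) (hN : ∀ i, N ≤ i → l i = 0) (i : ℕ) :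
    runStart l i ≤ i :=
  not_lt.mp fun h => lt_irrefl _ ((lt_runStart_iff hl hN).mp h)

lemma apply_eq_of_runStart_le (hl : IsPartition l) (hN : ∀ i, N ≤ i → l i = 0) {i j : ℕ}
    (hj : runStart l i ≤ j) (hji : j ≤ i) : l j = l i :=
  le_antisymm (not_lt.mp (mt (lt_runStart_iff hl hN).mpr (not_lt.mpr hj)))
    (antitone_nat_of_succ_le hl hji)

lemma runStart_congr {i j : ℕ} (h : l i = l j) : runStart l i = runStart l j := by
  simp only [runStart, h]

lemma apply_succ_eq_of_even_run (hl : IsPartition l) (hN : ∀ i, N ≤ i → l i = 0) {i : ℕ}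
    (hpos : 0 < l i) (hrun : Even {j | l j = l i}.ncard) (hoff : Even (i - runStart l i)) :
    l (i + 1) = l i := by
  -- the run of `l i` is the interval `[runStart l i, #{j | l i - 1 < l j})`
  have hsub : {j | l i < l j} ⊆ {j | l i - 1 < l j} := fun j (hj : l i < l j) =>
    show l i - 1 < l j by omega
  have hlen : Even ({j | l i - 1 < l j}.ncard - runStart l i) := by
    have hdiff : {j | l j = l i} = {j | l i - 1 < l j} \ {j | l i < l j} := by
      ext j; simp only [Set.mem_sdiff, Set.mem_ofPred_eq]; omega
    rwa [hdiff, Set.ncard_sdiff hsub (finite_setOf_lt_apply hN _)] at hrun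
  have hi : i < {j | l i - 1 < l j}.ncard := (lt_ncard_setOf_lt_iff hl hN _).mpr (by omega)
  have hle := runStart_le hl hN i
  have hsucc : l i - 1 < l (i + 1) := (lt_ncard_setOf_lt_iff hl hN _).mp (by
    obtain ⟨a, ha⟩ := hlen; obtain ⟨b, hb⟩ := hoff; omega)
  have := hl i
  omega

end Runs

noncomputable def hatInterB (l : ℕ → ℕ) : ℕ → ℤ :=
  interB (fun j => hphiB l (2 * j)) (fun j => hphiB l (2 * j + 1))

lemma hatInterB_eq_hphiB (l : ℕ → ℕ) (j : ℕ) :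
    hatInterB l j = 2 * (hphiB l j : ℤ) + if j % 2 = 0 then 1 else -1 := by
  rw [hatInterB, interB_eq, interleave_even_odd]

namespace IsPBN

variable {n : ℕ} {l : ℕ → ℕ}

/-- The parts of `λ` of each even value come in even number, so `λ` has as many parts as odd
parts modulo 2, and the number of odd parts has the parity of `|λ| = 2n+1`. -/
lemma odd_ncard_pos (hl : IsPBN n l) : Odd {i | 0 < l i}.ncard := by
  classical
  obtain ⟨-, ⟨N, hN, hsum⟩, hmult⟩ := hl
  have hlt : ∀ i, 0 < l i → i < N := fun i hi => by
    by_contra h; rw [hN i (by omega)] at hi; omega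
  set S := (range N).filter (fun i => 0 < l i)
  have hS : {i | 0 < l i} = S := by ext i; simpa [S] using hlt i
  have hodd : Odd #{i ∈ S | Odd (l i)} := by
    have : {i ∈ S | Odd (l i)} = {i ∈ range N | Odd (l i)} := by
      ext i; simp only [S, mem_filter]
      exact ⟨fun h => ⟨h.1.1, h.2⟩, fun h => ⟨⟨h.1, h.2.pos⟩, h.2⟩⟩
    rw [this, ← odd_sum_iff_odd_card_odd]
    rw [show ∑ i ∈ range N, l i = 2 * n + 1 from hsum]
    exact odd_two_mul_add_one n
  have heven : Even #{i ∈ S | ¬ Odd (l i)} := by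
    rw [card_eq_sum_card_image l]
    refine Finset.even_sum _ fun a ha => ?_
    obtain ⟨i, hi, rfl⟩ := mem_image.mp ha
    simp only [S, mem_filter, mem_range, Nat.not_odd_iff_even] at hi
    have hfib : #{j ∈ {i ∈ S | ¬ Odd (l i)} | l j = l i} = {j | l j = l i}.ncard := by
      rw [← Set.ncard_coe_finset]; congr 1
      ext j; simp only [S, coe_filter, mem_filter, mem_range, Set.mem_ofPred_eq,
        Nat.not_odd_iff_even]
      refine ⟨fun h => h.2, fun h => ?_⟩
      rw [h]; exact ⟨⟨⟨hlt j (h ▸ hi.1.2), hi.1.2⟩, hi.2⟩, rfl⟩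
    rw [hfib]
    exact hmult (l i) hi.1.2 hi.2
  rw [hS, Set.ncard_coe_finset, ← card_filter_add_card_filter_not (fun i => Odd (l i))]
  exact hodd.add_even heven

lemma odd_runStart_of_eq_zero (hl : IsPBN n l) {j : ℕ} (h0 : l j = 0) : Odd (runStart l j) := by
  simpa only [runStart, h0] using hl.odd_ncard_pos

lemma hphiB_of_eq_zero (hl : IsPBN n l) {j : ℕ} (h0 : l j = 0) : hphiB l j = 0 := by
  simp [hphiB, h0, hl.odd_runStart_of_eq_zero h0]

lemma hatInterB_eq (hl : IsPBN n l) (j : ℕ) :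
    hatInterB l j = if l j % 2 = 1 then (l j : ℤ)
      else if (j - runStart l j) % 2 = 0 then (l j : ℤ) - 1 else (l j : ℤ) + 1 := by
  have hpart := hl.1
  obtain ⟨N, hN, -⟩ := hl.2.1
  have hle := runStart_le hpart hN j
  have hzero : l j = 0 → runStart l j % 2 = 1 := fun h0 =>
    Nat.odd_iff.mp (hl.odd_runStart_of_eq_zero h0)
  rw [hatInterB_eq_hphiB]
  unfold hphiB
  simp only [Nat.odd_iff, Nat.even_iff]
  split_ifs <;> omega

lemma apply_succ_eq_of_even (hl : IsPBN n l) {j : ℕ} (he : l j % 2 = 0)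
    (hoff : (j - runStart l j) % 2 = 0) : l (j + 1) = l j := by
  have hpart := hl.1
  obtain ⟨N, hN, -⟩ := hl.2.1
  rcases Nat.eq_zero_or_pos (l j) with h0 | hpos
  · have := hpart j; omega
  · exact apply_succ_eq_of_even_run hpart hN hpos (hl.2.2 _ hpos (Nat.even_iff.mpr he))
      (Nat.even_iff.mpr hoff)

lemma hatInterB_lt_iff (hl : IsPBN n l) (j : ℕ) :
    hatInterB l j < hatInterB l (j + 1) ↔ l j % 2 = 0 ∧ (j - runStart l j) % 2 = 0 := by
  have hpart := hl.1
  obtain ⟨N, hN, -⟩ := hl.2.1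
  have hle := runStart_le hpart hN j
  have := hpart j
  have hrun : l (j + 1) = l j → runStart l (j + 1) = runStart l j := runStart_congr
  rw [hl.hatInterB_eq, hl.hatInterB_eq]
  constructor
  · intro hlt
    by_contra hne
    split_ifs at hlt <;> omega
  · rintro ⟨he, hoff⟩
    have := hl.apply_succ_eq_of_even he hoff
    split_ifs <;> omega

lemma isQBSeq_hatInterB (hl : IsPBN n l) : IsQBSeq (hatInterB l) := by
  have hpart := hl.1
  obtain ⟨N, hN, -⟩ := hl.2.1
  refine ⟨fun j => ?_, fun j => ?_, fun j => ?_⟩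
  · rw [hl.hatInterB_eq]; split_ifs <;> omega
  · have := hpart j
    rw [hl.hatInterB_eq, hl.hatInterB_eq]; split_ifs <;> omega
  · have := hpart j; have : l (j + 2) ≤ l (j + 1) := hpart (j + 1)
    have := runStart_le hpart hN j; have := runStart_le hpart hN (j + 2)
    have hrun : l (j + 2) = l j → runStart l (j + 2) = runStart l j := runStart_congr
    rw [hl.hatInterB_eq, hl.hatInterB_eq]; split_ifs <;> omega

lemma phiB_hatInterB (hl : IsPBN n l) (j : ℕ) : phiB (hatInterB l) j = l j := by
  have h := hl.isQBSeq_hatInterB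
  have hpart := hl.1
  obtain ⟨N, hN, -⟩ := hl.2.1
  cases j with
  | zero =>
    have := runStart_le hpart hN 0
    rw [h.phiB_zero]; simp only [hl.hatInterB_lt_iff]; rw [hl.hatInterB_eq]
    split_ifs <;> omega
  | succ i =>
    have := runStart_le hpart hN i
    have := runStart_le hpart hN (i + 1)
    have := hpart i
    have : l (i + 1) = l i → runStart l (i + 1) = runStart l i := runStart_congr
    have : runStart l (i + 1) ≤ i → l i = l (i + 1) :=
      fun h' => apply_eq_of_runStart_le hpart hN h' (Nat.le_succ i)
    have : l i % 2 = 0 → (i - runStart l i) % 2 = 0 → l (i + 1) = l i :=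
      hl.apply_succ_eq_of_even
    rw [h.phiB_succ]; simp only [hl.hatInterB_lt_iff]; rw [hl.hatInterB_eq]
    split_ifs <;> omega

lemma isBipartition_hphiB (hl : IsPBN n l) :
    IsBipartition n (fun j => hphiB l (2 * j)) (fun j => hphiB l (2 * j + 1)) ∧
      QB (fun j => hphiB l (2 * j)) (fun j => hphiB l (2 * j + 1)) := by
  have h : IsQBSeq (interB _ _) := hl.isQBSeq_hatInterB
  obtain ⟨hρ, hσ, hq⟩ := isQBSeq_interB_iff.mp h
  obtain ⟨N, hN, hsum⟩ := hl.2.1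
  have hN' : ∀ i, N ≤ i →
      interleave (fun j => hphiB l (2 * j)) (fun j => hphiB l (2 * j + 1)) i = 0 :=
    fun i hi => by rw [interleave_even_odd]; exact hl.hphiB_of_eq_zero (hN i hi)
  refine ⟨⟨hρ, hσ, N, hN', ?_⟩, hq⟩
  have hz := zsum_phiB_interB h hN'
  rw [show phiB (interB _ _) = fun j => (l j : ℤ) from funext hl.phiB_hatInterB, ← psum_cast,
    psum_eq_of_le hN (by omega), hsum] at hz
  exact_mod_cast (by omega : (psum (interleave _ _) N : ℤ) = n)

end IsPBN

lemma hphiB_phiB_interB {n : ℕ} {ρ σ : ℕ → ℕ} (hb : IsBipartition n ρ σ) (hq : QB ρ σ) (i : ℕ) :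
    hphiB (fun j => (PhiB ρ σ j).toNat) i = interleave ρ σ i := by
  have hl := isPBN_phiB_interB hb hq
  have h := hb.isQBSeq_interB hq
  obtain ⟨N, hN, -⟩ := hb.2.2
  have heq : hatInterB (fun j => (PhiB ρ σ j).toNat) = interB ρ σ :=
    hl.isQBSeq_hatInterB.eq_of_phiB_eq h <| funext fun j => by
      rw [hl.phiB_hatInterB]; exact Int.toNat_of_nonneg (phiB_interB_nonneg h hN j)
  have := congrFun heq i
  rw [hatInterB_eq_hphiB, interB_eq] at this
  omega

/-- `Φ^B(Φ̂^B(λ)) = λ` for `λ ∈ P^B_{2n+1}`, and the posets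
`Q_n^B` and `P^B_{2n+1}` are isomorphic via the mutually inverse
order-preserving maps `Φ^B` and `Φ̂^B`. -/
theorem QB_PB_order_iso (n : ℕ) :
    (∀ l : ℕ → ℕ, IsPBN n l →
      ∀ i, phiB (interB (fun j => hphiB l (2 * j)) (fun j => hphiB l (2 * j + 1))) i
        = (l i : ℤ)) ∧
    (∀ ρ σ : ℕ → ℕ, IsBipartition n ρ σ → QB ρ σ →
      IsPBN n (fun j => (PhiB ρ σ j).toNat)) ∧
    (∀ l : ℕ → ℕ, IsPBN n l →
      IsBipartition n (fun j => hphiB l (2 * j)) (fun j => hphiB l (2 * j + 1)) ∧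
      QB (fun j => hphiB l (2 * j)) (fun j => hphiB l (2 * j + 1))) ∧
    (∀ ρ σ : ℕ → ℕ, IsBipartition n ρ σ → QB ρ σ →
      ∀ i, hphiB (fun j => (PhiB ρ σ j).toNat) i = interleave ρ σ i) ∧
    (∀ ρ σ μ ν : ℕ → ℕ, IsBipartition n ρ σ → QB ρ σ →
      IsBipartition n μ ν → QB μ ν →
      (BiLE ρ σ μ ν ↔ ZDominates (PhiB μ ν) (PhiB ρ σ))) := by
  refine ⟨fun l hl => hl.phiB_hatInterB, fun ρ σ => isPBN_phiB_interB,
    fun l hl => hl.isBipartition_hphiB, fun ρ σ => hphiB_phiB_interB,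
    fun ρ σ μ ν hb hq hb' hq' => ?_⟩
  rw [biLE_iff_zdominates_interB]
  exact ((hb.isQBSeq_interB hq).zdominates_phiB_iff (hb'.isQBSeq_interB hq')).symm
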